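/- Let w be a smooth nowhere-vanishing complex function on a domain in ℂ solving the CP¹ sigma model equation ∂∂̄w − (2w̄/(1+|w|²)) ∂w ∂̄w = 0, and suppose smooth square roots of ∂̄w̄ and ∂w exist on the domain. Define ψ₁ = w (∂̄w̄)^{1/2}/(1+|w|²) and ψ₂ = (∂w)^{1/2}/(1+|w|²). Then ψ₁, ψ₂ satisfy the generalised Weierstrass system ∂ψ₁ = pψ₂, ∂̄ψ₂ = −pψ₁ with p = |∂w|/(1+|w|²). -/

import Mathlib

open Complex ComplexConjugate

/-- The Wirtinger derivative `∂ = ∂/∂z`. -/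
noncomputable def wdz (f : ℂ → ℂ) (z : ℂ) : ℂ :=
  (1 / 2 : ℂ) * (fderiv ℝ f z 1 - I * fderiv ℝ f z I)

/-- The Wirtinger derivative `∂̄ = ∂/∂z̄`. -/
noncomputable def wdzbar (f : ℂ → ℂ) (z : ℂ) : ℂ :=
  (1 / 2 : ℂ) * (fderiv ℝ f z 1 + I * fderiv ℝ f z I)

open Filter Topology
set_option maxHeartbeats 1000000

lemma wdz_mul {f g : ℂ → ℂ} {z : ℂ} (hf : DifferentiableAt ℝ f z)
    (hg : DifferentiableAt ℝ g z) :
    wdz (fun t => f t * g t) z = wdz f z * g z + f z * wdz g z := by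
  simp only [wdz, fderiv_fun_mul hf hg, ContinuousLinearMap.add_apply,
    ContinuousLinearMap.smul_apply, smul_eq_mul]
  ring

lemma wdzbar_mul {f g : ℂ → ℂ} {z : ℂ} (hf : DifferentiableAt ℝ f z)
    (hg : DifferentiableAt ℝ g z) :
    wdzbar (fun t => f t * g t) z = wdzbar f z * g z + f z * wdzbar g z := by
  simp only [wdzbar, fderiv_fun_mul hf hg, ContinuousLinearMap.add_apply,
    ContinuousLinearMap.smul_apply, smul_eq_mul]
  ring

lemma wdz_conj {f : ℂ → ℂ} {z : ℂ} (hf : DifferentiableAt ℝ f z) :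
    wdz (fun t => conj (f t)) z = conj (wdzbar f z) := by
  have h : HasFDerivAt (fun t => conj (f t))
      ((Complex.conjCLE : ℂ ≃L[ℝ] ℂ).toContinuousLinearMap.comp (fderiv ℝ f z)) z :=
    (Complex.conjCLE.toContinuousLinearMap.hasFDerivAt).comp z hf.hasFDerivAt
  simp only [wdz, wdzbar, h.fderiv, ContinuousLinearMap.coe_comp', Function.comp_apply,
    ContinuousLinearEquiv.coe_coe, Complex.conjCLE_apply, map_mul, map_add, map_div₀,
    map_one, map_ofNat, Complex.conj_I]
  ring

lemma wdzbar_conj {f : ℂ → ℂ} {z : ℂ} (hf : DifferentiableAt ℝ f z) :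
    wdzbar (fun t => conj (f t)) z = conj (wdz f z) := by
  have h : HasFDerivAt (fun t => conj (f t))
      ((Complex.conjCLE : ℂ ≃L[ℝ] ℂ).toContinuousLinearMap.comp (fderiv ℝ f z)) z :=
    (Complex.conjCLE.toContinuousLinearMap.hasFDerivAt).comp z hf.hasFDerivAt
  simp only [wdz, wdzbar, h.fderiv, ContinuousLinearMap.coe_comp', Function.comp_apply,
    ContinuousLinearEquiv.coe_coe, Complex.conjCLE_apply, map_mul, map_add, map_sub, map_div₀,
    map_one, map_ofNat, Complex.conj_I]
  ring

lemma wdz_inv {f : ℂ → ℂ} {z : ℂ} (hf : DifferentiableAt ℝ f z) (h0 : f z ≠ 0) :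
    wdz (fun t => (f t)⁻¹) z = -((f z)^2)⁻¹ * wdz f z := by
  have hinv : HasFDerivAt (fun y : ℂ => y⁻¹)
      ((ContinuousLinearMap.smulRight (1 : ℂ →L[ℂ] ℂ) (-((f z) ^ 2)⁻¹)).restrictScalars ℝ)
      (f z) := ((hasDerivAt_inv h0).hasFDerivAt).restrictScalars ℝ
  have h : HasFDerivAt (fun t => (f t)⁻¹)
      (((ContinuousLinearMap.smulRight (1 : ℂ →L[ℂ] ℂ) (-((f z) ^ 2)⁻¹)).restrictScalars ℝ).comp
        (fderiv ℝ f z)) z := hinv.comp z hf.hasFDerivAt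
  simp only [wdz, h.fderiv, ContinuousLinearMap.coe_comp', Function.comp_apply,
    ContinuousLinearMap.coe_restrictScalars', ContinuousLinearMap.smulRight_apply,
    ContinuousLinearMap.one_apply, smul_eq_mul]
  ring

lemma wdzbar_inv {f : ℂ → ℂ} {z : ℂ} (hf : DifferentiableAt ℝ f z) (h0 : f z ≠ 0) :
    wdzbar (fun t => (f t)⁻¹) z = -((f z)^2)⁻¹ * wdzbar f z := by
  have hinv : HasFDerivAt (fun y : ℂ => y⁻¹)
      ((ContinuousLinearMap.smulRight (1 : ℂ →L[ℂ] ℂ) (-((f z) ^ 2)⁻¹)).restrictScalars ℝ)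
      (f z) := ((hasDerivAt_inv h0).hasFDerivAt).restrictScalars ℝ
  have h : HasFDerivAt (fun t => (f t)⁻¹)
      (((ContinuousLinearMap.smulRight (1 : ℂ →L[ℂ] ℂ) (-((f z) ^ 2)⁻¹)).restrictScalars ℝ).comp
        (fderiv ℝ f z)) z := hinv.comp z hf.hasFDerivAt
  simp only [wdzbar, h.fderiv, ContinuousLinearMap.coe_comp', Function.comp_apply,
    ContinuousLinearMap.coe_restrictScalars', ContinuousLinearMap.smulRight_apply,
    ContinuousLinearMap.one_apply, smul_eq_mul]
  ring

lemma wdz_const_add {f : ℂ → ℂ} {z : ℂ} (c : ℂ) :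
    wdz (fun t => c + f t) z = wdz f z := by
  simp only [wdz, fderiv_const_add]

lemma wdzbar_const_add {f : ℂ → ℂ} {z : ℂ} (c : ℂ) :
    wdzbar (fun t => c + f t) z = wdzbar f z := by
  simp only [wdzbar, fderiv_const_add]

lemma wdz_congr {f g : ℂ → ℂ} {z : ℂ} (h : f =ᶠ[𝓝 z] g) : wdz f z = wdz g z := by
  rw [wdz, wdz, h.fderiv_eq]

lemma wdzbar_congr {f g : ℂ → ℂ} {z : ℂ} (h : f =ᶠ[𝓝 z] g) : wdzbar f z = wdzbar g z := by
  rw [wdzbar, wdzbar, h.fderiv_eq]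


lemma wdz_wdzbar_comm {w : ℂ → ℂ} {s : Set ℂ} (hs : IsOpen s) (hw : ContDiffOn ℝ (⊤ : ℕ∞) w s)
    {z : ℂ} (hz : z ∈ s) :
    wdz (fun t => wdzbar w t) z = wdzbar (fun t => wdz w t) z := by
  set f' : ℂ → ℂ →L[ℝ] ℂ := fderiv ℝ w with hf'
  have hdiffon : DifferentiableOn ℝ w s := hw.differentiableOn (by simp)
  have hev : ∀ᶠ y in 𝓝 z, HasFDerivAt w (f' y) y := by
    filter_upwards [hs.mem_nhds hz] with y hy
    exact (hdiffon.differentiableAt (hs.mem_nhds hy)).hasFDerivAt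
  have hf'cd : ContDiffOn ℝ (⊤ : ℕ∞) f' s := ContDiffOn.fderiv_of_isOpen (m := (⊤ : ℕ∞)) hw hs (by simp)
  have hf'diff : DifferentiableAt ℝ f' z :=
    ((hf'cd.differentiableOn (by simp)).differentiableAt (hs.mem_nhds hz))
  set f'' : ℂ →L[ℝ] ℂ →L[ℝ] ℂ := fderiv ℝ f' z with hf''
  have hx : HasFDerivAt f' f'' z := hf'diff.hasFDerivAt
  have hsym : ∀ v u : ℂ, f'' v u = f'' u v := fun v u =>
    second_derivative_symmetric_of_eventually hev hx v u
  -- derivative of t ↦ f' t v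
  have happ : ∀ v : ℂ, HasFDerivAt (fun t => f' t v)
      ((ContinuousLinearMap.apply ℝ ℂ v).comp f'') z := fun v =>
    (ContinuousLinearMap.apply ℝ ℂ v).hasFDerivAt.comp z hx
  have h1 : ∀ v : ℂ, fderiv ℝ (fun t => f' t v) z = (ContinuousLinearMap.apply ℝ ℂ v).comp f'' :=
    fun v => (happ v).fderiv
  have hbar : HasFDerivAt (fun t => wdzbar w t)
      (((1/2 : ℂ) • ((ContinuousLinearMap.apply ℝ ℂ 1).comp f''
        + I • (ContinuousLinearMap.apply ℝ ℂ I).comp f''))) z := by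
    have := (((happ 1).fun_add (((happ I).const_mul I)))).const_mul (1/2 : ℂ)
    exact this
  have hz' : HasFDerivAt (fun t => wdz w t)
      (((1/2 : ℂ) • ((ContinuousLinearMap.apply ℝ ℂ 1).comp f''
        - I • (ContinuousLinearMap.apply ℝ ℂ I).comp f''))) z := by
    have := (((happ 1).fun_sub (((happ I).const_mul I)))).const_mul (1/2 : ℂ)
    exact this
  rw [wdz, wdzbar, hbar.fderiv, hz'.fderiv]
  simp only [ContinuousLinearMap.smul_apply, ContinuousLinearMap.add_apply,
    ContinuousLinearMap.sub_apply, ContinuousLinearMap.coe_comp', Function.comp_apply,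
    ContinuousLinearMap.apply_apply, smul_eq_mul]
  rw [hsym I 1]
  ring


lemma wdzbar_continuousOn {f : ℂ → ℂ} {s : Set ℂ} (hs : IsOpen s) (hf : ContDiffOn ℝ (⊤ : ℕ∞) f s) :
    ContinuousOn (fun t => wdzbar f t) s := by
  have h : ContinuousOn (fderiv ℝ f) s := hf.continuousOn_fderiv_of_isOpen hs (by simp)
  have h1 : ContinuousOn (fun t => fderiv ℝ f t 1) s := h.clm_apply continuousOn_const
  have hI : ContinuousOn (fun t => fderiv ℝ f t I) s := h.clm_apply continuousOn_const
  simp only [wdzbar]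
  exact continuousOn_const.mul (h1.add (continuousOn_const.mul hI))

/-- From a nowhere-vanishing solution `w` of the `CP¹` sigma model equation, the
functions `ψ₁ = w(∂̄w̄)^{1/2}/(1+|w|²)` and `ψ₂ = (∂w)^{1/2}/(1+|w|²)` (for a
consistent smooth branch `r` of the square root of `∂w`, so that `(∂̄w̄)^{1/2} = r̄`)
solve the generalised Weierstrass system with `p = |∂w|/(1+|w|²)`. -/
theorem cp1_to_gw (s : Set ℂ) (hs : IsOpen s) (w : ℂ → ℂ)
    (hw : ContDiffOn ℝ (⊤ : ℕ∞) w s) (hwne : ∀ z ∈ s, w z ≠ 0)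
    (hcp1 : ∀ z ∈ s,
      wdz (fun t => wdzbar w t) z
        - 2 * conj (w z) / (1 + ((normSq (w z) : ℝ) : ℂ)) * wdz w z * wdzbar w z = 0)
    (r : ℂ → ℂ) (hr : ContDiffOn ℝ (⊤ : ℕ∞) r s) (hr2 : ∀ z ∈ s, r z ^ 2 = wdz w z)
    (ψ₁ ψ₂ : ℂ → ℂ) (p : ℂ → ℝ)
    (hψ₁ : ∀ z, ψ₁ z = w z * conj (r z) / (1 + ((normSq (w z) : ℝ) : ℂ)))
    (hψ₂ : ∀ z, ψ₂ z = r z / (1 + ((normSq (w z) : ℝ) : ℂ)))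
    (hp : ∀ z, p z = ‖wdz w z‖ / (1 + normSq (w z))) :
    ∀ z ∈ s, wdz ψ₁ z = ((p z : ℝ) : ℂ) * ψ₂ z ∧
      wdzbar ψ₂ z = -((p z : ℝ) : ℂ) * ψ₁ z := by
  have hD : ∀ t : ℂ, (1 : ℂ) + ((normSq (w t) : ℝ) : ℂ) ≠ 0 := by
    intro t h
    have h2 := congrArg Complex.re h
    simp [Complex.add_re, Complex.ofReal_re] at h2
    nlinarith [normSq_nonneg (w t)]
  have hwd : ∀ t ∈ s, DifferentiableAt ℝ w t := fun t ht =>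
    (hw.differentiableOn (by simp)).differentiableAt (hs.mem_nhds ht)
  have hrd : ∀ t ∈ s, DifferentiableAt ℝ r t := fun t ht =>
    (hr.differentiableOn (by simp)).differentiableAt (hs.mem_nhds ht)
  have hwc : ∀ t ∈ s, DifferentiableAt ℝ (fun u => conj (w u)) t := fun t ht => (hwd t ht).star
  have hrc : ∀ t ∈ s, DifferentiableAt ℝ (fun u => conj (r u)) t := fun t ht => (hrd t ht).star
  have hgeq : (fun u => (1:ℂ) + ((normSq (w u) : ℝ) : ℂ)) = fun u => 1 + w u * conj (w u) := by
    funext u; rw [Complex.mul_conj]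
  have hgd : ∀ t ∈ s, DifferentiableAt ℝ (fun u => (1:ℂ) + ((normSq (w u) : ℝ) : ℂ)) t := by
    intro t ht
    rw [hgeq]
    exact (differentiableAt_const _).add ((hwd t ht).mul (hwc t ht))
  have hwdzg : ∀ t ∈ s, wdz (fun u => (1:ℂ) + ((normSq (w u) : ℝ) : ℂ)) t
      = wdz w t * conj (w t) + w t * conj (wdzbar w t) := by
    intro t ht
    rw [hgeq, wdz_const_add, wdz_mul (hwd t ht) (hwc t ht), wdz_conj (hwd t ht)]
  have hwdzbarg : ∀ t ∈ s, wdzbar (fun u => (1:ℂ) + ((normSq (w u) : ℝ) : ℂ)) t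
      = wdzbar w t * conj (w t) + w t * conj (wdz w t) := by
    intro t ht
    rw [hgeq, wdzbar_const_add, wdzbar_mul (hwd t ht) (hwc t ht), wdzbar_conj (hwd t ht)]
  -- key identity for ∂̄r
  have hkey : ∀ t ∈ s, 2 * (r t * wdzbar r t) * (1 + ((normSq (w t) : ℝ) : ℂ))
      = 2 * conj (w t) * r t ^ 2 * wdzbar w t := by
    intro t ht
    have h3 : (fun u => wdz w u) =ᶠ[𝓝 t] (fun u => r u * r u) := by
      filter_upwards [hs.mem_nhds ht] with u hu
      rw [← hr2 u hu, sq]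
    have h2 : wdzbar (fun u => wdz w u) t = wdzbar r t * r t + r t * wdzbar r t := by
      rw [wdzbar_congr h3, wdzbar_mul (hrd t ht) (hrd t ht)]
    have h4 := wdz_wdzbar_comm hs hw ht
    have h5 := eq_of_sub_eq_zero (hcp1 t ht)
    have e : wdzbar r t * r t + r t * wdzbar r t
        = 2 * conj (w t) / (1 + ((normSq (w t) : ℝ) : ℂ)) * wdz w t * wdzbar w t := by
      rw [← h2, ← h4, h5]
    rw [← hr2 t ht] at e
    field_simp [hD t] at e
    linear_combination e
  have hkeyne : ∀ t ∈ s, r t ≠ 0 →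
      wdzbar r t = conj (w t) * r t * wdzbar w t / (1 + ((normSq (w t) : ℝ) : ℂ)) := by
    intro t ht hrt
    have e := hkey t ht
    field_simp [hD t]
    have h2 : r t * (2 * (wdzbar r t * (1 + ((normSq (w t) : ℝ) : ℂ))
        - conj (w t) * r t * wdzbar w t)) = 0 := by linear_combination e
    rcases mul_eq_zero.mp h2 with h | h
    · exact absurd h hrt
    · linear_combination h / 2
  have hdrbar : ∀ t ∈ s,
      wdzbar r t = conj (w t) * r t * wdzbar w t / (1 + ((normSq (w t) : ℝ) : ℂ)) := by
    intro t ht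
    by_cases hrt : r t = 0
    · by_cases hev : ∀ᶠ u in 𝓝 t, r u = 0
      · have h0 : wdzbar r t = 0 := by
          rw [wdzbar_congr (hev : r =ᶠ[𝓝 t] fun _ => (0:ℂ))]
          simp [wdzbar]
        rw [h0, hrt]
        simp
      · have hfreq : ∃ᶠ u in 𝓝 t, ¬ r u = 0 := Filter.not_eventually.mp hev
        set F : ℂ → ℂ := fun u =>
          wdzbar r u - conj (w u) * r u * wdzbar w u / (1 + ((normSq (w u) : ℝ) : ℂ)) with hF
        have hFcont : ContinuousOn F s := by
          apply ContinuousOn.sub (wdzbar_continuousOn hs hr)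
          apply ContinuousOn.div
          · exact ((Complex.continuous_conj.comp_continuousOn (hw.continuousOn)).mul
              (hr.continuousOn)).mul (wdzbar_continuousOn hs hw)
          · exact continuousOn_const.add
              (Complex.continuous_ofReal.comp_continuousOn
                (Complex.continuous_normSq.comp_continuousOn hw.continuousOn))
          · exact fun u _ => hD u
        have hmem : ∀ᶠ u in 𝓝 t, u ∈ s := hs.mem_nhds ht
        have hF0 : ∃ᶠ u in 𝓝 t, F u = (fun _ => (0:ℂ)) u := by
          refine (hfreq.and_eventually hmem).mono ?_
          rintro u ⟨hru, hus⟩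
          simp only [hF]
          rw [hkeyne u hus hru]
          ring
        have hFt : F t = 0 :=
          tendsto_nhds_unique_of_frequently_eq
            (hFcont.continuousAt (hs.mem_nhds ht)) tendsto_const_nhds hF0
        have := sub_eq_zero.mp hFt
        exact this
    · exact hkeyne t ht hrt
  intro z hz
  have hnorm : ((‖wdz w z‖ : ℝ) : ℂ) = r z * conj (r z) := by
    rw [← hr2 z hz, norm_pow, Complex.mul_conj]
    norm_cast
    simp [Complex.sq_norm]
  have hpz : ((p z : ℝ) : ℂ) = r z * conj (r z) / (1 + ((normSq (w z) : ℝ) : ℂ)) := by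
    rw [hp z]
    push_cast
    rw [hnorm]
  have hD' : (1 : ℂ) + w z * conj (w z) ≠ 0 := by
    rw [Complex.mul_conj]; exact hD z
  constructor
  · have hψ₁f : ψ₁ = fun t => (w t * conj (r t)) * ((1:ℂ) + ((normSq (w t) : ℝ) : ℂ))⁻¹ :=
      funext fun t => by rw [hψ₁ t, div_eq_mul_inv]
    rw [hψ₁f,
      wdz_mul ((hwd z hz).fun_mul (hrc z hz)) ((hgd z hz).fun_inv (hD z)),
      wdz_mul (hwd z hz) (hrc z hz), wdz_conj (hrd z hz),
      wdz_inv (hgd z hz) (hD z), hwdzg z hz, hdrbar z hz, hψ₂ z, hpz]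
    simp only [map_div₀, map_mul, map_add, map_one, Complex.conj_conj, Complex.conj_ofReal]
    rw [← hr2 z hz]
    rw [show ((normSq (w z) : ℝ) : ℂ) = w z * conj (w z) from (Complex.mul_conj _).symm]
    field_simp
    ring
  · have hψ₂f : ψ₂ = fun t => r t * ((1:ℂ) + ((normSq (w t) : ℝ) : ℂ))⁻¹ :=
      funext fun t => by rw [hψ₂ t, div_eq_mul_inv]
    rw [hψ₂f,
      wdzbar_mul (hrd z hz) ((hgd z hz).fun_inv (hD z)),
      wdzbar_inv (hgd z hz) (hD z), hwdzbarg z hz, hdrbar z hz, hψ₁ z, hpz]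
    rw [← hr2 z hz]
    simp only [map_div₀, map_mul, map_add, map_one, map_pow, Complex.conj_conj,
      Complex.conj_ofReal]
    rw [show ((normSq (w z) : ℝ) : ℂ) = w z * conj (w z) from (Complex.mul_conj _).symm]
    field_simp
    ring
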